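/- arXiv:0802.0339 — 2 statements merged into one kernel-verified Lean document; each statement's English description precedes it below -/
import Mathlib

section
/- There is a universal constant c > 0 such that for every finite set V with |V| ≥ 2 and every probability distribution μ on V, d(μ, U) ≥ (c / log|V|) · ENT(μ), where U is the uniform distribution on V. -/
open Finset

/-- Relative entropy `ENT(p) = Σ_i p_i log(|V| p_i)` of a distribution on a finite set,
with the convention `0 log 0 = 0` (automatic since `Real.log 0 = 0`). -/
noncomputable def relEnt {V : Type*} [Fintype V] (p : V → ℝ) : ℝ :=
  ∑ x, p x * Real.log ((Fintype.card V : ℝ) * p x)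

/-- `d(p,q) = (1/2) p log p + (1/2) q log q − ((p+q)/2) log((p+q)/2)`, with `0 log 0 = 0`. -/
noncomputable def dEnt (p q : ℝ) : ℝ :=
  p / 2 * Real.log p + q / 2 * Real.log q - (p + q) / 2 * Real.log ((p + q) / 2)

/-- The "distance" `d(p,q) = Σ_i d(p_i, q_i)` between two distributions on a finite set. -/
noncomputable def vecD {V : Type*} [Fintype V] (p q : V → ℝ) : ℝ :=
  ∑ i, dEnt (p i) (q i)

/-- `p` is a probability distribution on the finite set `V`. -/
def IsDist {V : Type*} [Fintype V] (p : V → ℝ) : Prop :=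
  (∀ x, 0 ≤ p x) ∧ (∑ x, p x) = 1

/-!
Put `N = |V|` and `t = N μ x`. Since `μ` sums to one, `ENT(μ)` is the average over `x` of
`klFun t = t log t + 1 - t`, and by homogeneity of `d` the distance `d(μ, U)` is the average
of `d(t, 1)`; so it suffices that `klFun t ≤ 20 log N · d(t, 1)` for `0 ≤ t ≤ N`.
For `t ≤ 4` already `klFun t ≤ 10 d(t, 1)`: the difference vanishes at `t = 1` and its
derivative `4 log t - 5 log ((t + 1) / 2)` has the sign of `t⁴ - ((t + 1) / 2)⁵`, which
changes only at `1` on `[0, 4]`. For `t ≥ 4`, `d(t, 1) ≥ t / 20` while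
`klFun t ≤ t log t ≤ t log N`.
-/

open Real InformationTheory

lemma dEnt_mul (u p q : ℝ) : dEnt (u * p) (u * q) = u * dEnt p q := by
  rcases eq_or_ne u 0 with rfl | hu
  · simp [dEnt]
  have mul_log_mul : ∀ x, x * log (u * x) = x * log u + x * log x := fun x => by
    rcases eq_or_ne x 0 with rfl | hx
    · simp
    · rw [log_mul hu hx, mul_add]
  unfold dEnt
  rw [show (u * p + u * q) / 2 = u * ((p + q) / 2) by ring]
  linear_combination (u / 2) * mul_log_mul p + (u / 2) * mul_log_mul q
    - u * mul_log_mul ((p + q) / 2)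

lemma dEnt_one_apply (t : ℝ) : dEnt t 1 = t * log t / 2 - (t + 1) / 2 * log ((t + 1) / 2) := by
  simp only [dEnt, log_one]; ring

lemma continuous_dEnt_one : Continuous fun t => dEnt t 1 := by
  simp only [dEnt_one_apply]
  exact (continuous_mul_log.div_const 2).sub
    (continuous_mul_log.comp ((continuous_id.add continuous_const).div_const 2))

lemma hasDerivAt_dEnt_one {t : ℝ} (ht : 0 < t) :
    HasDerivAt (fun s => dEnt s 1) ((log t - log ((t + 1) / 2)) / 2) t := by
  have hmid : HasDerivAt (fun s : ℝ => (s + 1) / 2) (1 / 2) t :=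
    ((hasDerivAt_id t).add_const 1).div_const 2
  have h := ((hasDerivAt_mul_log ht.ne').div_const 2).sub
    ((hasDerivAt_mul_log (by positivity : (t + 1) / 2 ≠ 0)).comp t hmid)
  simp only [dEnt_one_apply]
  exact h.congr_deriv (by ring)

lemma pow_four_le_midpoint_pow_five {t : ℝ} (h0 : 0 ≤ t) (h1 : t ≤ 1) :
    t ^ 4 ≤ ((t + 1) / 2) ^ 5 := by
  nlinarith [sq_nonneg (t - 1), mul_nonneg h0 (sub_nonneg.2 h1), pow_nonneg h0 3, pow_nonneg h0 2]

lemma midpoint_pow_five_le_pow_four {t : ℝ} (h1 : 1 ≤ t) (h4 : t ≤ 4) :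
    ((t + 1) / 2) ^ 5 ≤ t ^ 4 := by
  nlinarith [sq_nonneg (t - 1), sq_nonneg (t - 4), mul_nonneg (sub_nonneg.2 h1) (sub_nonneg.2 h4),
    sq_nonneg (t * t - 1), sq_nonneg (t * t - 4 * t), sq_nonneg (t * t - 2 * t)]

lemma klFun_le_ten_mul_dEnt_one {t : ℝ} (h0 : 0 ≤ t) (h4 : t ≤ 4) :
    klFun t ≤ 10 * dEnt t 1 := by
  set G : ℝ → ℝ := fun s => 10 * dEnt s 1 - klFun s with hG
  set G' : ℝ → ℝ := fun s => 4 * log s - 5 * log ((s + 1) / 2)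
  have hGc : Continuous G := (continuous_const.mul continuous_dEnt_one).sub continuous_klFun
  have hG' : ∀ s, 0 < s → HasDerivAt G (G' s) s := fun s hs =>
    (((hasDerivAt_dEnt_one hs).const_mul 10).sub (hasDerivAt_klFun hs.ne')).congr_deriv (by ring)
  have hG'_eq : ∀ s, G' s = log (s ^ 4) - log (((s + 1) / 2) ^ 5) := fun s => by
    simp only [G', log_pow]; push_cast; ring
  have hG1 : G 1 = 0 := by simp [hG, dEnt, klFun_one]
  suffices 0 ≤ G t by simp only [hG] at this; linarith
  rcases le_total t 1 with h1 | h1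
  · have hanti : AntitoneOn G (Set.Icc 0 1) := by
      refine antitoneOn_of_hasDerivWithinAt_nonpos (f' := G') (convex_Icc 0 1) hGc.continuousOn
        (fun s hs => ?_) (fun s hs => ?_) <;> rw [interior_Icc] at hs
      · exact (hG' s hs.1).hasDerivWithinAt
      · rw [hG'_eq, sub_nonpos]
        exact log_le_log (pow_pos hs.1 4) (pow_four_le_midpoint_pow_five hs.1.le hs.2.le)
    simpa [hG1] using hanti ⟨h0, h1⟩ ⟨zero_le_one, le_rfl⟩ h1
  · have hmono : MonotoneOn G (Set.Icc 1 4) := by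
      refine monotoneOn_of_hasDerivWithinAt_nonneg (f' := G') (convex_Icc 1 4) hGc.continuousOn
        (fun s hs => ?_) (fun s hs => ?_) <;> rw [interior_Icc] at hs
      · exact (hG' s (by linarith [hs.1])).hasDerivWithinAt
      · rw [hG'_eq, sub_nonneg]
        exact log_le_log (pow_pos (by linarith [hs.1]) 5)
          (midpoint_pow_five_le_pow_four hs.1.le hs.2.le)
    simpa [hG1] using hmono ⟨le_rfl, by norm_num⟩ ⟨h1, h4⟩ h1

lemma one_div_ten_le_log_eight_div_five : (1 / 10 : ℝ) ≤ log (8 / 5) := by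
  have h : log 2 ≤ log ((8 / 5 : ℝ) ^ 2) := log_le_log two_pos (by norm_num)
  rw [log_pow] at h
  push_cast at h
  linarith [log_two_gt_d9]

lemma one_div_five_le_dEnt_four_one : (1 / 5 : ℝ) ≤ dEnt 4 1 := by
  have h57 : log ((5 : ℝ) ^ 3) ≤ log ((2 : ℝ) ^ 7) := log_le_log (by norm_num) (by norm_num)
  have h4 : log (4 : ℝ) = 2 * log 2 := by
    rw [show (4 : ℝ) = 2 ^ 2 by norm_num, log_pow]; push_cast; ring
  have h52 : log (5 / 2 : ℝ) = log 5 - log 2 := log_div (by norm_num) (by norm_num)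
  rw [log_pow, log_pow] at h57
  push_cast at h57
  rw [dEnt_one_apply, show ((4 : ℝ) + 1) / 2 = 5 / 2 by norm_num, h4, h52]
  nlinarith [log_two_gt_d9]

lemma div_twenty_le_dEnt_one {t : ℝ} (h4 : 4 ≤ t) : t / 20 ≤ dEnt t 1 := by
  set K : ℝ → ℝ := fun s => dEnt s 1 - s / 20 with hK
  have hmono : MonotoneOn K (Set.Ici 4) := by
    refine monotoneOn_of_hasDerivWithinAt_nonneg
      (f' := fun s => (log s - log ((s + 1) / 2)) / 2 - 1 / 20) (convex_Ici 4)
      (continuous_dEnt_one.sub (continuous_id.div_const 20)).continuousOn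
      (fun s hs => ?_) (fun s hs => ?_) <;> rw [interior_Ici] at hs <;> have hs : 4 < s := hs
    · exact ((hasDerivAt_dEnt_one (by linarith)).sub
        ((hasDerivAt_id s).div_const 20)).hasDerivWithinAt
    · have hratio : log (8 / 5) ≤ log (s / ((s + 1) / 2)) :=
        log_le_log (by norm_num) (by rw [le_div_iff₀ (by positivity)]; linarith)
      rw [log_div (x := s) (by linarith) (by positivity)] at hratio
      linarith [one_div_ten_le_log_eight_div_five]
  have := hmono Set.self_mem_Ici h4 h4
  simp only [hK] at this
  linarith [one_div_five_le_dEnt_four_one]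

lemma klFun_le_mul_log_mul_dEnt_one {N t : ℝ} (hN : 2 ≤ N) (h0 : 0 ≤ t) (htN : t ≤ N) :
    klFun t ≤ 20 * log N * dEnt t 1 := by
  have hlogN : log 2 ≤ log N := log_le_log two_pos hN
  rcases le_total t 4 with h4 | h4
  · have hA := klFun_le_ten_mul_dEnt_one h0 h4
    have hd : 0 ≤ dEnt t 1 := by linarith [klFun_nonneg h0]
    nlinarith [log_two_gt_d9]
  · calc klFun t ≤ t * log t := by rw [klFun_apply]; linarith
      _ ≤ t * log N := by gcongr
      _ = 20 * log N * (t / 20) := by ring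
      _ ≤ 20 * log N * dEnt t 1 := by
        gcongr
        · linarith [log_two_gt_d9]
        · exact div_twenty_le_dEnt_one h4

lemma relEnt_eq_inv_card_mul_sum_klFun {V : Type*} [Fintype V] {p : V → ℝ}
    (hp : ∑ x, p x = 1) :
    relEnt p = (Fintype.card V : ℝ)⁻¹ * ∑ x, klFun (Fintype.card V * p x) := by
  have hV : (Fintype.card V : ℝ) ≠ 0 := by
    intro h
    simp_all [Fintype.card_eq_zero_iff]
  have hsum : ∑ x, klFun (Fintype.card V * p x) = Fintype.card V * relEnt p := by
    simp only [klFun_apply, relEnt, sum_sub_distrib, sum_add_distrib, ← mul_sum, mul_assoc, hp,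
      sum_const, card_univ, nsmul_eq_mul]
    ring
  rw [hsum, inv_mul_cancel_left₀ hV]

lemma vecD_uniform {V : Type*} [Fintype V] (p : V → ℝ) :
    vecD p (fun _ => (Fintype.card V : ℝ)⁻¹)
      = (Fintype.card V : ℝ)⁻¹ * ∑ x, dEnt (Fintype.card V * p x) 1 := by
  rw [vecD, mul_sum]
  refine sum_congr rfl fun x _ => ?_
  have : Nonempty V := ⟨x⟩
  rw [← dEnt_mul, mul_one, inv_mul_cancel_left₀ (by positivity)]

/-- There is a universal constant `c > 0` such that for every finite set `V` with `|V| ≥ 2`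
and every distribution `μ` on `V`, `d(μ, U) ≥ (c / log |V|) · ENT(μ)`,
`U` being the uniform distribution on `V`. -/
theorem dEnt_uniform_ge_entropy :
    ∃ c : ℝ, 0 < c ∧
      ∀ (V : Type) [Fintype V], 2 ≤ Fintype.card V →
        ∀ μ : V → ℝ, IsDist μ →
          c / Real.log (Fintype.card V) * relEnt μ
            ≤ vecD μ (fun _ => (Fintype.card V : ℝ)⁻¹) := by
  refine ⟨1 / 20, by norm_num, fun V _ hcard μ ⟨hμ0, hμ1⟩ => ?_⟩
  have hN : (2 : ℝ) ≤ Fintype.card V := by exact_mod_cast hcard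
  have hlogN : 0 < log (Fintype.card V) := log_pos (by linarith)
  rw [relEnt_eq_inv_card_mul_sum_klFun hμ1, vecD_uniform, mul_left_comm, mul_sum]
  gcongr with x
  have hμx : μ x ≤ 1 := hμ1 ▸ single_le_sum (fun i _ => hμ0 i) (mem_univ x)
  have hpoint := klFun_le_mul_log_mul_dEnt_one hN (mul_nonneg (by linarith) (hμ0 x))
    (mul_le_of_le_one_right (by linarith) hμx)
  rw [div_mul_eq_mul_div, div_le_iff₀ hlogN]
  linarith
end

section
/- Consider the L-reversal chain on n cards (n even, 2 ≤ L ≤ n/4) with positions and cards both labeled 1,...,n around the n-cycle, started from the identity arrangement. Let A be the event that after t steps, the cards 1,...,n/2 occupy the positions 1,...,n/2 in some order. Then P(A) ≥ (1 − 2L/n)^t. -/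
open Finset

/-- Reversal of the interval of positions `v, v+1, …, v+l` of the `n`-cycle `ZMod n`,
as a function on positions: `p = v + i` with `0 ≤ i ≤ l` is sent to `v + l - i`. -/
def revFun (n : ℕ) (v : ZMod n) (l : ℕ) (p : ZMod n) : ZMod n :=
  if (p - v).val ≤ l then v + (l : ZMod n) - (p - v) else p

/-- The cycle (graph) distance between two positions of the `n`-cycle `ZMod n`. -/
def cdist {n : ℕ} (a b : ZMod n) : ℕ := min (a - b).val (b - a).val

/-- The position `p` is cut by the move reversing the interval `v, …, v+l`: exactly the
four positions `v-1, v, v+l, v+l+1` (whose cards become adjacent to a different pair of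
cards) are cut, and the trivial moves `l = 0` cut nobody. -/
def isCut {n : ℕ} (v : ZMod n) (l : ℕ) (p : ZMod n) : Prop :=
  l ≠ 0 ∧ (p = v - 1 ∨ p = v ∨ p = v + (l : ZMod n) ∨ p = v + (l : ZMod n) + 1)

/-- The position, after `m` steps, of the card initially in position `x`, when the moves
of the `L`-reversal chain are given by `ω` (`(ω s).1` = starting position of the interval
reversed at step `s`, `(ω s).2` = its length). -/
def posAt {n L t : ℕ} (ω : Fin t → ZMod n × Fin (L + 1)) (x : ZMod n) : ℕ → ZMod n
  | 0 => x
  | m + 1 => if h : m < t then revFun n (ω ⟨m, h⟩).1 ((ω ⟨m, h⟩).2 : ℕ) (posAt ω x m)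
             else posAt ω x m

/-- The card initially in position `x` is cut by the move performed at step `s`
(i.e. at time `s + 1`). -/
def cutAt {n L t : ℕ} (ω : Fin t → ZMod n × Fin (L + 1)) (x : ZMod n) (s : Fin t) : Prop :=
  isCut (ω s).1 ((ω s).2 : ℕ) (posAt ω x s)

/-- The probability of the event `E` under the uniform distribution on the finite
sample space `Ω`; for the `L`-reversal chain, an i.i.d. uniform move sequence is a
uniform point of `Ω = Fin t → ZMod n × Fin (L+1)`. -/
noncomputable def probOf {Ω : Type*} [Fintype Ω] (E : Ω → Prop) : ℝ :=
  (Nat.card {ω : Ω // E ω} : ℝ) / (Fintype.card Ω : ℝ)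

/-!
Call a move good if it maps the arc of positions `{p | p.val < n/2}` into itself; this is the
case whenever the reversed interval lies inside that arc or inside the complementary one. If
every one of the `t` moves is good, the cards of the first half never leave it. Of the
`n (L + 1)` moves, at least `(n - 2L)(L + 1)` are good (there are `n - 2L` admissible starting
points, each with every length), and the moves are independent, so the event has probability
at least `(1 - 2L/n)^t`.
-/

open Set (MapsTo)

section probOf

variable {Ω : Type*} [Fintype Ω]

lemma probOf_mono {E F : Ω → Prop} (h : ∀ ω, E ω → F ω) : probOf E ≤ probOf F := by
  unfold probOf
  gcongr
  exact Nat.card_le_card_of_injective _ (Subtype.impEmbedding E F h).injective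

lemma probOf_forall_apply {ι : Type*} [Fintype ι] [DecidableEq ι] (G : Ω → Prop) :
    probOf (fun ω : ι → Ω => ∀ i, G (ω i)) = probOf G ^ Fintype.card ι := by
  unfold probOf
  rw [Nat.card_congr Equiv.subtypePiEquivPi, Nat.card_pi, Finset.prod_const, Finset.card_univ,
    Fintype.card_fun, div_pow]
  simp

end probOf

lemma posAt_mem_of_mapsTo {n L t : ℕ} {ω : Fin t → ZMod n × Fin (L + 1)} {S : Set (ZMod n)}
    (hω : ∀ s, MapsTo (revFun n (ω s).1 (ω s).2) S S) {x : ZMod n} (hx : x ∈ S) :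
    ∀ m, posAt ω x m ∈ S
  | 0 => hx
  | m + 1 => by
      rw [posAt]
      split_ifs with h
      · exact hω ⟨m, h⟩ (posAt_mem_of_mapsTo hω hx m)
      · exact posAt_mem_of_mapsTo hω hx m

section revFun

variable {n : ℕ} {v p : ZMod n} {l : ℕ}

lemma revFun_val_le_of_sub_val_le [NeZero n] (hp : (p - v).val ≤ l) :
    (revFun n v l p).val ≤ v.val + l := by
  have hsub : (l : ZMod n) - (p - v) = ((l - (p - v).val : ℕ) : ZMod n) := by
    rw [Nat.cast_sub hp, ZMod.natCast_zmod_val]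
  rw [revFun, if_pos hp, add_sub_assoc, hsub]
  calc _ ≤ v.val + ((l - (p - v).val : ℕ) : ZMod n).val := ZMod.val_add_le _ _
    _ ≤ v.val + l := by
      rw [ZMod.val_natCast]
      have := Nat.mod_le (l - (p - v).val) n
      omega

lemma revFun_eq_self_of_val_lt (hpv : p.val < v.val) (hl : v.val + l < n) :
    revFun n v l p = p := by
  have hlt : l < (p - v).val := by
    by_contra! hle
    have hval : (p - v + v).val = (p - v).val + v.val := ZMod.val_add_of_lt (by omega)
    rw [sub_add_cancel] at hval
    omega
  rw [revFun, if_neg hlt.not_ge]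

lemma mapsTo_revFun_of_within_arc [NeZero n] {k : ℕ}
    (hv : v.val + l < k ∨ (k ≤ v.val ∧ v.val + l < n)) :
    MapsTo (revFun n v l) {p | p.val < k} {p | p.val < k} := by
  intro p (hp : p.val < k)
  show (revFun n v l p).val < k
  by_cases hin : (p - v).val ≤ l
  · rcases hv with hv | ⟨hkv, hvn⟩
    · exact (revFun_val_le_of_sub_val_le hin).trans_lt hv
    · rwa [revFun_eq_self_of_val_lt (by omega) hvn]
  · rwa [revFun, if_neg hin]

end revFun

lemma card_range_union_Ico {n k L : ℕ} (hLk : L ≤ k) (hkn : k + L ≤ n) :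
    #(range (k - L) ∪ Ico k (n - L)) = n - 2 * L := by
  rw [card_union_of_disjoint, card_range, Nat.card_Ico]
  · omega
  · exact disjoint_left.mpr fun i hi hi' => by simp only [mem_range, mem_Ico] at hi hi'; omega

lemma card_mapsTo_revFun_ge {n k L : ℕ} [NeZero n] (hLk : L ≤ k) (hkn : k + L ≤ n) :
    (n - 2 * L) * (L + 1) ≤
      Nat.card {m : ZMod n × Fin (L + 1) //
        MapsTo (revFun n m.1 m.2) {p | p.val < k} {p | p.val < k}} := by
  classical
  set A := range (k - L) ∪ Ico k (n - L)
  have hA : ∀ i ∈ A, i + L < k ∨ (k ≤ i ∧ i + L < n) := fun i hi => by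
    simp only [A, mem_union, mem_range, mem_Ico] at hi
    omega
  have hstarts : #(A.image (Nat.cast : ℕ → ZMod n)) = n - 2 * L := by
    rw [card_image_of_injOn, card_range_union_Ico hLk hkn]
    intro i hi j hj hij
    have hi' := hA i hi
    have hj' := hA j hj
    simpa [ZMod.val_natCast_of_lt (by omega : i < n),
      ZMod.val_natCast_of_lt (by omega : j < n)] using congrArg ZMod.val hij
  have hsub : A.image (Nat.cast : ℕ → ZMod n) ×ˢ univ ⊆
      univ.filter fun m : ZMod n × Fin (L + 1) =>
        MapsTo (revFun n m.1 m.2) {p | p.val < k} {p | p.val < k} := by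
    rintro ⟨v, l⟩ hvl
    simp only [mem_product, mem_image, mem_univ, and_true] at hvl
    obtain ⟨i, hi, rfl⟩ := hvl
    have hi' := hA i hi
    refine mem_filter.mpr ⟨mem_univ _, mapsTo_revFun_of_within_arc ?_⟩
    rw [ZMod.val_natCast_of_lt (by omega)]
    have := l.isLt
    omega
  calc (n - 2 * L) * (L + 1) = #(A.image (Nat.cast : ℕ → ZMod n) ×ˢ univ) := by
        rw [card_product, hstarts, card_univ, Fintype.card_fin]
    _ ≤ _ := card_le_card hsub
    _ = _ := by rw [Nat.card_eq_fintype_card, Fintype.card_subtype]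

lemma one_sub_le_probOf_mapsTo_revFun {n k L : ℕ} [NeZero n] (hLk : L ≤ k) (hkn : k + L ≤ n) :
    1 - 2 * (L : ℝ) / n ≤
      probOf fun m : ZMod n × Fin (L + 1) =>
        MapsTo (revFun n m.1 m.2) {p | p.val < k} {p | p.val < k} := by
  have hcount := card_mapsTo_revFun_ge (n := n) hLk hkn
  unfold probOf
  rw [Fintype.card_prod, ZMod.card, Fintype.card_fin,
    le_div_iff₀ (Nat.cast_pos.mpr (Nat.mul_pos (NeZero.pos n) L.succ_pos))]
  calc (1 - 2 * (L : ℝ) / n) * (n * (L + 1) : ℕ) = ((n - 2 * L) * (L + 1) : ℕ) := by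
        push_cast [Nat.cast_sub (by omega : 2 * L ≤ n)]
        field_simp [Nat.cast_ne_zero.mpr (NeZero.ne n)]
    _ ≤ _ := by exact_mod_cast hcount

theorem half_stays_probability_general (n L t : ℕ) [NeZero n] (hLn : 4 * L ≤ n) :
    (1 - 2 * (L : ℝ) / n) ^ t ≤
      probOf (fun ω : Fin t → ZMod n × Fin (L + 1) =>
        ∀ x : ZMod n, x.val < n / 2 → (posAt ω x t).val < n / 2) := by
  have hnonneg : 0 ≤ 1 - 2 * (L : ℝ) / n := by
    rw [sub_nonneg, div_le_one (by exact_mod_cast Nat.pos_of_ne_zero (NeZero.ne n))]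
    exact_mod_cast (by omega : 2 * L ≤ n)
  calc (1 - 2 * (L : ℝ) / n) ^ t
      ≤ (probOf fun m : ZMod n × Fin (L + 1) =>
          MapsTo (revFun n m.1 m.2) {p | p.val < n / 2} {p | p.val < n / 2}) ^ t :=
        pow_le_pow_left₀ hnonneg (one_sub_le_probOf_mapsTo_revFun (by omega) (by omega)) t
    _ = probOf fun ω : Fin t → ZMod n × Fin (L + 1) =>
          ∀ s, MapsTo (revFun n (ω s).1 (ω s).2) {p | p.val < n / 2} {p | p.val < n / 2} :=
        (Fintype.card_fin t ▸ probOf_forall_apply _).symm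
    _ ≤ _ := probOf_mono fun ω hω x hx => posAt_mem_of_mapsTo hω hx t

/-- For the `L`-reversal chain on `n` cards (`n` even, `2 ≤ L ≤ n/4`) started from the
identity arrangement, the probability that after `t` steps the `n/2` cards of one half
of the cycle again occupy (in some order) the `n/2` positions of that half is at least
`(1 − 2L/n)^t`.  (Cards are labeled by their initial positions, so the half is the arc
of positions `p` with `p.val < n/2`.) -/
theorem half_stays_probability (n L t : ℕ) [NeZero n] (heven : n % 2 = 0)
    (hL2 : 2 ≤ L) (hLn : 4 * L ≤ n) :
    (1 - 2 * (L : ℝ) / n) ^ t ≤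
      probOf (fun ω : Fin t → ZMod n × Fin (L + 1) =>
        ∀ x : ZMod n, x.val < n / 2 → (posAt ω x t).val < n / 2) :=
  half_stays_probability_general n L t hLn
end
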